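/- arXiv:1208.3692 — 5 statements merged into one kernel-verified Lean document; each statement's English description precedes it below -/
import Mathlib

section
/- Let f : ℂ → ℂ be a transcendental entire function and suppose there exists an unbounded sequence (r_n) of positive real numbers such that m(r_n, f) > r_n for all n, where m(r,f) = min{|f(z)| : |z| = r}. Then f is strongly polynomial-like. -/
/-!
A nonconstant entire function is an open map, so the boundary of `f(closedBall 0 ρ)` lies in
`f(sphere 0 ρ)`. If `m(ρ, f) > ρ`, the closed disc of radius `ρ` misses `f(sphere 0 ρ)` and
contains `f 0` (for `ρ > |f 0|`); hence the component of the complement of `f(sphere 0 ρ)`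
containing the disc cannot leave the compact set `f(closedBall 0 ρ)`, and so is bounded.
The discs of radii `ρ` taken from a strictly increasing unbounded subsequence of `(rₙ)`
exhaust `ℂ`.
-/

open Filter Topology

/-- The set `K(f)` of points whose orbit under iteration of `f` is bounded. -/
def boundedOrbitSet (f : ℂ → ℂ) : Set ℂ :=
  {z : ℂ | Bornology.IsBounded (Set.range fun n : ℕ => f^[n] z)}

/-- `f` is a transcendental entire function: holomorphic on all of `ℂ` and not a polynomial. -/
def TranscendentalEntire (f : ℂ → ℂ) : Prop :=
  Differentiable ℂ f ∧ ¬∃ p : Polynomial ℂ, ∀ z, f z = p.eval z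

/-- `S` surrounds `T`: `T` lies in a bounded connected component of the complement of `S`. -/
def SurroundsSet (S T : Set ℂ) : Prop :=
  ∃ z ∈ Sᶜ, T ⊆ connectedComponentIn Sᶜ z ∧
    Bornology.IsBounded (connectedComponentIn Sᶜ z)

/-- `f` is strongly polynomial-like: there is an exhausting sequence of bounded, simply
connected domains `D n` with `closure (D n) ⊆ D (n+1)` such that `f(∂(D n))` surrounds
`closure (D n)`. -/
def StronglyPolynomialLike (f : ℂ → ℂ) : Prop :=
  ∃ D : ℕ → Set ℂ,
    (∀ n, IsOpen (D n)) ∧ (∀ n, IsConnected (D n)) ∧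
    (∀ n, Bornology.IsBounded (D n)) ∧
    (∀ n, SimplyConnectedSpace (D n)) ∧
    (∀ n, closure (D n) ⊆ D (n + 1)) ∧
    (⋃ n, D n) = Set.univ ∧
    (∀ n, SurroundsSet (f '' frontier (D n)) (closure (D n)))

/-- The minimum modulus `m(r, f)` of `f` on the circle of radius `r` about the origin. -/
noncomputable def minMod (f : ℂ → ℂ) (r : ℝ) : ℝ :=
  sInf ((fun z => ‖f z‖) '' Metric.sphere (0 : ℂ) r)

open Set Metric

theorem IsPreconnected.subset_of_disjoint_frontier {X : Type*} [TopologicalSpace X]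
    {s t : Set X} (hs : IsPreconnected s) (hst : (s ∩ t).Nonempty)
    (hfr : Disjoint s (frontier t)) : s ⊆ t := by
  have hint : ∀ x ∈ s, x ∈ closure t → x ∈ interior t := fun x hxs hxc =>
    by_contra fun hxi => hfr.ne_of_mem hxs ⟨hxc, hxi⟩ rfl
  obtain ⟨x, hxs, hxt⟩ := hst
  refine (hs.subset_of_closure_inter_subset isOpen_interior
    ⟨x, hxs, hint x hxs (subset_closure hxt)⟩ ?_).trans interior_subset
  exact fun y ⟨hyc, hys⟩ => hint y hys (closure_mono interior_subset hyc)

theorem IsOpenMap.frontier_image_subset_image_diff {X Y : Type*} [TopologicalSpace X]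
    [TopologicalSpace Y] {f : X → Y} (hf : IsOpenMap f) {K U : Set X}
    (hK : IsClosed (f '' K)) (hU : IsOpen U) (hUK : U ⊆ K) :
    frontier (f '' K) ⊆ f '' (K \ U) := by
  rintro w ⟨hwc, hwi⟩
  obtain ⟨z, hzK, rfl⟩ := hK.closure_subset hwc
  exact ⟨z, ⟨hzK, fun hzU => hwi (interior_maximal (image_mono hUK) (hf U hU) ⟨z, hzU, rfl⟩)⟩,
    rfl⟩

theorem TranscendentalEntire.isOpenMap {f : ℂ → ℂ} (hf : TranscendentalEntire f) :
    IsOpenMap f :=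
  (Complex.analyticOnNhd_univ_iff_differentiable.mpr hf.1).is_constant_or_isOpenMap.resolve_left
    fun ⟨w, hw⟩ => hf.2 ⟨Polynomial.C w, fun z => by rw [hw, Polynomial.eval_C]⟩

theorem minMod_le_norm (f : ℂ → ℂ) {ρ : ℝ} {z : ℂ} (hz : z ∈ sphere (0 : ℂ) ρ) :
    minMod f ρ ≤ ‖f z‖ :=
  csInf_le ⟨0, by rintro _ ⟨w, -, rfl⟩; exact norm_nonneg _⟩ ⟨z, hz, rfl⟩

theorem surroundsSet_closedBall {f : ℂ → ℂ} (hc : Continuous f) (ho : IsOpenMap f)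
    {c : ℂ} {ρ : ℝ} (hfc : f c ∈ closedBall c ρ)
    (hsph : ∀ z ∈ sphere c ρ, f z ∉ closedBall c ρ) :
    SurroundsSet (f '' sphere c ρ) (closedBall c ρ) := by
  set K := f '' sphere c ρ
  set C := connectedComponentIn Kᶜ c
  have hball : closedBall c ρ ⊆ Kᶜ := by
    rintro v hv ⟨z, hz, rfl⟩
    exact hsph z hz hv
  have hcρ : c ∈ closedBall c ρ := mem_closedBall_self (nonempty_closedBall.mp ⟨_, hfc⟩)
  have hballC : closedBall c ρ ⊆ C :=
    (convex_closedBall c ρ).isPreconnected.subset_connectedComponentIn hcρ hball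
  have hT : IsCompact (f '' closedBall c ρ) := (isCompact_closedBall c ρ).image hc
  have hfr : frontier (f '' closedBall c ρ) ⊆ K := by
    simpa only [closedBall_sdiff_ball] using
      ho.frontier_image_subset_image_diff hT.isClosed isOpen_ball ball_subset_closedBall
  have hCT : C ⊆ f '' closedBall c ρ :=
    isPreconnected_connectedComponentIn.subset_of_disjoint_frontier
      ⟨f c, hballC hfc, mem_image_of_mem f hcρ⟩
      ((disjoint_compl_left.mono_right hfr).mono_left (connectedComponentIn_subset _ _))
  exact ⟨c, hball hcρ, hballC, hT.isBounded.subset hCT⟩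

theorem stronglyPolynomialLike_of_surroundsSet_spheres {f : ℂ → ℂ} {ρ : ℕ → ℝ}
    (h0 : 0 < ρ 0) (hmono : StrictMono ρ) (hunb : ∀ R, ∃ n, R < ρ n)
    (hsurr : ∀ n, SurroundsSet (f '' sphere 0 (ρ n)) (closedBall 0 (ρ n))) :
    StronglyPolynomialLike f := by
  have hpos : ∀ n, 0 < ρ n := fun n => h0.trans_le (hmono.monotone n.zero_le)
  refine ⟨fun n => ball 0 (ρ n), fun _ => isOpen_ball,
    fun n => ⟨nonempty_ball.mpr (hpos n), (convex_ball _ _).isPreconnected⟩,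
    fun _ => isBounded_ball, fun n => ?_, fun n => ?_, ?_, fun n => ?_⟩
  · have := (convex_ball (0 : ℂ) (ρ n)).contractibleSpace (nonempty_ball.mpr (hpos n))
    infer_instance
  · rw [closure_ball _ (hpos n).ne']
    exact closedBall_subset_ball (hmono n.lt_succ_self)
  · refine eq_univ_of_forall fun z => mem_iUnion.mpr ?_
    obtain ⟨n, hn⟩ := hunb ‖z‖
    exact ⟨n, mem_ball_zero_iff.mpr hn⟩
  · rw [frontier_ball _ (hpos n).ne', closure_ball _ (hpos n).ne']
    exact hsurr n

theorem exists_strictMono_unbounded_subseq {r : ℕ → ℝ} (hub : ∀ R, ∃ n, R < r n) (a : ℝ) :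
    ∃ φ : ℕ → ℕ, a < r (φ 0) ∧ StrictMono (r ∘ φ) ∧ ∀ R, ∃ n, R < r (φ n) := by
  choose g hg using hub
  let φ : ℕ → ℕ := fun n => Nat.rec (g a) (fun k m => g (max (r m) k)) n
  have hstep : ∀ k : ℕ, max (r (φ k)) k < r (φ (k + 1)) := fun k => hg _
  refine ⟨φ, hg a, strictMono_nat_of_lt_succ fun k => (le_max_left _ _).trans_lt (hstep k),
    fun R => ⟨⌈R⌉₊ + 1, ?_⟩⟩
  exact (Nat.le_ceil R).trans_lt ((le_max_right _ _).trans_lt (hstep _))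

theorem spl_of_min_modulus_condition_general (f : ℂ → ℂ) (hf : TranscendentalEntire f)
    (r : ℕ → ℝ) (hub : ∀ R : ℝ, ∃ n, R < r n)
    (hmin : ∀ n, r n < minMod f (r n)) :
    StronglyPolynomialLike f := by
  obtain ⟨φ, hφ0, hmono, hunb⟩ := exists_strictMono_unbounded_subseq hub ‖f 0‖
  have hf0 : ∀ n, ‖f 0‖ < r (φ n) := fun n => hφ0.trans_le (hmono.monotone n.zero_le)
  refine stronglyPolynomialLike_of_surroundsSet_spheres ((norm_nonneg _).trans_lt (hf0 0))
    hmono hunb fun n => surroundsSet_closedBall hf.1.continuous hf.isOpenMap ?_ fun z hz => ?_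
  · exact mem_closedBall_zero_iff.mpr (hf0 n).le
  · exact fun hfz => (mem_closedBall_zero_iff.mp hfz).not_gt
      ((hmin (φ n)).trans_le (minMod_le_norm f hz))

/-- If `m(rₙ, f) > rₙ` along an unbounded sequence of positive radii, then `f` is
strongly polynomial-like. -/
theorem spl_of_min_modulus_condition (f : ℂ → ℂ) (hf : TranscendentalEntire f)
    (r : ℕ → ℝ) (hpos : ∀ n, 0 < r n) (hub : ∀ R : ℝ, ∃ n, R < r n)
    (hmin : ∀ n, r n < minMod f (r n)) :
    StronglyPolynomialLike f :=
  spl_of_min_modulus_condition_general f hf r hub hmin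
end

section
/- Let (E_n)_{n∈ℕ} be a sequence of compact, totally disconnected subsets of ℂ. Then the union ⋃_{n∈ℕ} E_n is totally disconnected. -/
open Set Metric

lemma clopen_split {K : Set ℂ} (hK : IsCompact K) (hKtd : IsTotallyDisconnected K)
    {A B : Set ℂ} (hA : IsClosed A) (hB : IsClosed B) (hAB : Disjoint A B) :
    ∃ P Q : Set ℂ, K = P ∪ Q ∧ IsCompact P ∧ IsCompact Q ∧ Disjoint P Q ∧
      Disjoint P B ∧ Disjoint Q A := by
  haveI : CompactSpace K := isCompact_iff_compactSpace.mp hK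
  haveI : TotallyDisconnectedSpace K :=
    totallyDisconnectedSpace_subtype_iff.mpr hKtd
  set A' : Set K := Subtype.val ⁻¹' A with hA'
  set B' : Set K := Subtype.val ⁻¹' B with hB'
  have hB'c : IsClosed B' := hB.preimage continuous_subtype_val
  have hA'cpt : IsCompact A' := (hA.preimage continuous_subtype_val).isCompact
  have hsep : ∀ x : K, x ∈ A' → ∃ V : Set K, IsClopen V ∧ x ∈ V ∧ V ⊆ B'ᶜ := by
    intro x hx
    refine compact_exists_isClopen_in_isOpen hB'c.isOpen_compl ?_
    intro hxB
    exact hAB.ne_of_mem hx hxB rfl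
  choose g hg1 hg2 hg3 using hsep
  obtain ⟨s, hs⟩ := hA'cpt.elim_finite_subcover (fun p : A' => g p p.2)
    (fun p => (hg1 p p.2).2) (fun x hx => mem_iUnion.2 ⟨⟨x, hx⟩, hg2 x hx⟩)
  set V : Set K := ⋃ p ∈ s, g p p.2 with hV
  have hVclopen : IsClopen V := isClopen_biUnion_finset fun p _ => hg1 p p.2
  have hVB : V ⊆ B'ᶜ := by
    intro x hx
    simp only [hV, mem_iUnion] at hx
    obtain ⟨p, _, hp⟩ := hx
    exact hg3 p p.2 hp
  have hA'V : A' ⊆ V := by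
    intro x hx
    simpa [hV] using hs hx
  refine ⟨Subtype.val '' V, Subtype.val '' Vᶜ, ?_, ?_, ?_, ?_, ?_, ?_⟩
  · rw [← image_union, union_compl_self, image_univ, Subtype.range_coe]
  · exact (hVclopen.isClosed.isCompact).image continuous_subtype_val
  · exact (hVclopen.compl.isClosed.isCompact).image continuous_subtype_val
  · rw [disjoint_left]
    rintro z ⟨u, hu, rfl⟩ ⟨v, hv, hvz⟩
    rw [Subtype.val_injective hvz] at hv
    exact hv hu
  · rw [disjoint_left]
    rintro z ⟨u, hu, rfl⟩ hzB
    exact hVB hu hzB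
  · rw [disjoint_left]
    rintro z ⟨u, hu, rfl⟩ hzA
    exact hu (hA'V hzA)

lemma step_lemma {K U W : Set ℂ} (hK : IsCompact K) (hKtd : IsTotallyDisconnected K)
    (hd : Disjoint (closure U) (closure W)) :
    ∃ U' W' : Set ℂ, IsOpen U' ∧ IsOpen W' ∧ closure U ⊆ U' ∧ closure W ⊆ W' ∧
      Disjoint (closure U') (closure W') ∧ K ⊆ U' ∪ W' := by
  obtain ⟨P, Q, hKPQ, hPc, hQc, hPQ, hPB, hQA⟩ :=
    clopen_split hK hKtd isClosed_closure isClosed_closure hd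
  set A₁ := closure U ∪ P with hA₁
  set B₁ := closure W ∪ Q with hB₁
  have hA₁c : IsClosed A₁ := isClosed_closure.union hPc.isClosed
  have hB₁c : IsClosed B₁ := isClosed_closure.union hQc.isClosed
  have hdis : Disjoint A₁ B₁ := by
    simp only [hA₁, hB₁, disjoint_union_left, disjoint_union_right]
    exact ⟨⟨hd, hPB⟩, ⟨hQA.symm, hPQ⟩⟩
  obtain ⟨U', hU'o, hAU', hclU'⟩ :=
    normal_exists_closure_subset hA₁c hB₁c.isOpen_compl hdis.subset_compl_right
  obtain ⟨W', hW'o, hBW', hclW'⟩ :=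
    normal_exists_closure_subset hB₁c isClosed_closure.isOpen_compl
      (fun z hz hz' => (hclU' hz') hz)
  refine ⟨U', W', hU'o, hW'o, (subset_union_left).trans hAU',
    (subset_union_left).trans hBW', ?_, ?_⟩
  · exact disjoint_compl_right.mono_right hclW' |>.symm.symm
  · intro z hz
    rcases hKPQ ▸ hz with hzP | hzQ
    · exact Or.inl (hAU' (Or.inr hzP))
    · exact Or.inr (hBW' (Or.inr hzQ))

/-- A countable union of compact, totally disconnected subsets of `ℂ` is totally
disconnected. -/
theorem union_compact_totallyDisconnected (E : ℕ → Set ℂ)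
    (hcomp : ∀ n, IsCompact (E n)) (htd : ∀ n, IsTotallyDisconnected (E n)) :
    IsTotallyDisconnected (⋃ n, E n) := by
  intro t hts ht x hx y hy
  by_contra hxy
  -- initial disjoint balls around x and y
  have hdxy : 0 < dist x y := dist_pos.mpr hxy
  set r : ℝ := dist x y / 3 with hr
  have hr0 : 0 < r := by positivity
  have hball : Disjoint (closure (ball x r)) (closure (ball y r)) := by
    refine Disjoint.mono closure_ball_subset_closedBall closure_ball_subset_closedBall ?_
    apply Metric.closedBall_disjoint_closedBall
    rw [hr]; linarith
  -- the type of "good pairs"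
  set T := {p : Set ℂ × Set ℂ // IsOpen p.1 ∧ IsOpen p.2 ∧
      Disjoint (closure p.1) (closure p.2)} with hT
  have hstep : ∀ (n : ℕ) (p : T), ∃ q : T,
      closure p.1.1 ⊆ q.1.1 ∧ closure p.1.2 ⊆ q.1.2 ∧ E n ⊆ q.1.1 ∪ q.1.2 := by
    rintro n ⟨⟨U, W⟩, hU, hW, hd⟩
    obtain ⟨U', W', hU'o, hW'o, hUU', hWW', hd', hcov⟩ :=
      step_lemma (hcomp n) (htd n) hd
    exact ⟨⟨⟨U', W'⟩, hU'o, hW'o, hd'⟩, hUU', hWW', hcov⟩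
  choose next h1 h2 h3 using hstep
  set p0 : T := ⟨⟨ball x r, ball y r⟩, isOpen_ball, isOpen_ball, hball⟩ with hp0
  set f : ℕ → T := fun n => Nat.rec p0 next n with hf
  have hfs : ∀ n, f (n + 1) = next n (f n) := fun n => rfl
  have hmono1 : Monotone (fun n => (f n).1.1) :=
    monotone_nat_of_le_succ fun n => (subset_closure.trans (h1 n (f n)))
  have hmono2 : Monotone (fun n => (f n).1.2) :=
    monotone_nat_of_le_succ fun n => (subset_closure.trans (h2 n (f n)))
  set U : Set ℂ := ⋃ n, (f n).1.1 with hU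
  set W : Set ℂ := ⋃ n, (f n).1.2 with hW
  have hUo : IsOpen U := isOpen_iUnion fun n => (f n).2.1
  have hWo : IsOpen W := isOpen_iUnion fun n => (f n).2.2.1
  have hUW : Disjoint U W := by
    rw [disjoint_left]
    rintro z hzU hzW
    obtain ⟨m, hm⟩ := mem_iUnion.mp hzU
    obtain ⟨n, hn⟩ := mem_iUnion.mp hzW
    have hzm : z ∈ (f (max m n)).1.1 := hmono1 (le_max_left m n) hm
    have hzn : z ∈ (f (max m n)).1.2 := hmono2 (le_max_right m n) hn
    exact (f (max m n)).2.2.2.ne_of_mem (subset_closure hzm) (subset_closure hzn) rfl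
  have hcov : (⋃ n, E n) ⊆ U ∪ W := by
    rintro z hz
    obtain ⟨n, hn⟩ := mem_iUnion.mp hz
    rcases h3 n (f n) hn with h | h
    · exact Or.inl (mem_iUnion.2 ⟨n + 1, h⟩)
    · exact Or.inr (mem_iUnion.2 ⟨n + 1, h⟩)
  have hxU : x ∈ U := mem_iUnion.2 ⟨0, mem_ball_self hr0⟩
  have hyW : y ∈ W := mem_iUnion.2 ⟨0, mem_ball_self hr0⟩
  obtain ⟨z, hzt, hzU, hzW⟩ := ht U W hUo hWo (hts.trans hcov) ⟨x, hx, hxU⟩ ⟨y, hy, hyW⟩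
  exact hUW.ne_of_mem hzU hzW rfl
end

section
/- There exists a transcendental entire function f : ℂ → ℂ such that some connected component K of K(f) has empty interior but is not a singleton; that is, there exists z₀ ∈ K(f) such that the connected component of z₀ in K(f) has empty interior and contains at least two points. -/
open Filter Topology

/-!
Take `f z = π sin z`. It maps `ℝ` into `[-π, π]`, so `ℝ ⊆ K(f)` and the component of `0`
contains `1`. It has empty interior because `K(f)` is meagre. By Baire and Cauchy's estimate,
outside a meagre set every point of `K(f)` has bounded derivatives `(fⁿ)'`. But
`|(fⁿ)'(z)|² = ∏_{k<n} |π² - f^{k+1}(z)²|` is unbounded along every orbit avoiding the critical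
values `±π` (whose preimages form countably many analytic level sets). With the weight
`g ζ = min |ζ| 1` one has `(5/4) g(f ζ) ≤ g(ζ) |π² - ζ²|` for all `ζ`: a small factor at
`ζ = ±π + v` is matched by the small weight of `f ζ = -π sin v` near the repelling fixed point
`0`. Telescoping gives growth `(5/4)ⁿ` whenever `|f^{n+1} z| ≥ 1`, and if the orbit eventually
stays in the unit disc, every later factor is at least `8`.
-/

open Set Metric Complex
open scoped Real

theorem hasDerivAt_iterate_prod {𝕜 : Type*} [NontriviallyNormedField 𝕜] {f f' : 𝕜 → 𝕜}
    (hf : ∀ x, HasDerivAt f (f' x) x) (n : ℕ) (x : 𝕜) :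
    HasDerivAt f^[n] (∏ k ∈ Finset.range n, f' (f^[k] x)) x := by
  induction n with
  | zero => simpa using hasDerivAt_id x
  | succ n ih =>
    rw [Function.iterate_succ', Finset.prod_range_succ, mul_comm]
    exact (hf _).comp x ih

theorem pow_mul_le_mul_prod {c : ℝ} {u a : ℕ → ℝ} (hc : 0 ≤ c) (ha : ∀ k, 0 ≤ a k)
    (h : ∀ k, c * u (k + 1) ≤ u k * a k) (n : ℕ) :
    c ^ n * u n ≤ u 0 * ∏ k ∈ Finset.range n, a k := by
  induction n with
  | zero => simp
  | succ n ih =>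
    calc c ^ (n + 1) * u (n + 1) = c ^ n * (c * u (n + 1)) := by ring
      _ ≤ c ^ n * (u n * a n) := mul_le_mul_of_nonneg_left (h n) (pow_nonneg hc n)
      _ = c ^ n * u n * a n := by ring
      _ ≤ u 0 * (∏ k ∈ Finset.range n, a k) * a n := by gcongr; exact ha n
      _ = u 0 * ∏ k ∈ Finset.range (n + 1), a k := by rw [Finset.prod_range_succ]; ring

theorem interior_setOf_eq_eq_empty {g : ℂ → ℂ} (hg : Differentiable ℂ g) {c : ℂ}
    (hne : ∃ z, g z ≠ c) : interior {z | g z = c} = ∅ := by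
  refine eq_empty_iff_forall_notMem.mpr fun z hz ↦ ?_
  have hconst : g = fun _ ↦ c :=
    (analyticOnNhd_univ_iff_differentiable.mpr hg).eq_of_eventuallyEq analyticOnNhd_const
      (mem_interior_iff_mem_nhds.mp hz)
  obtain ⟨w, hw⟩ := hne
  exact hw (congrFun hconst w)

theorem bddAbove_norm_deriv_iterate_of_mem_interior {f : ℂ → ℂ} (hf : Differentiable ℂ f)
    {M : ℝ} {z : ℂ} (hz : z ∈ interior {z | ∀ n : ℕ, ‖f^[n] z‖ ≤ M}) :
    BddAbove (range fun n : ℕ ↦ ‖deriv f^[n] z‖) := by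
  obtain ⟨R, hR, hball⟩ := nhds_basis_closedBall.mem_iff.mp (mem_interior_iff_mem_nhds.mp hz)
  refine ⟨M / R, forall_mem_range.mpr fun n ↦ ?_⟩
  exact norm_deriv_le_of_forall_mem_sphere_norm_le hR (hf.iterate n).diffContOnCl
    fun w hw ↦ hball (sphere_subset_closedBall hw) n

theorem isMeagre_boundedOrbitSet {f : ℂ → ℂ} (hf : Differentiable ℂ f)
    (h : IsMeagre {z | BddAbove (range fun n : ℕ ↦ ‖deriv f^[n] z‖)}) :
    IsMeagre (boundedOrbitSet f) := by
  set G : ℕ → Set ℂ := fun M ↦ {z | ∀ n : ℕ, ‖f^[n] z‖ ≤ M}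
  have hG : ∀ M, IsClosed (G M) := fun M ↦ by
    simp only [G, ofPred_forall]
    exact isClosed_iInter fun n ↦ isClosed_le ((hf.iterate n).continuous.norm) continuous_const
  refine ((isMeagre_iUnion (f := fun M ↦ frontier (G M)) fun M ↦ ?_).union h).mono fun z hz ↦ ?_
  · exact ((isClosed_frontier.isNowhereDense_iff).mpr (interior_frontier (hG M))).isMeagre
  · have hz : Bornology.IsBounded (range fun n : ℕ ↦ f^[n] z) := hz
    obtain ⟨C, hC⟩ := isBounded_iff_forall_norm_le.mp hz
    obtain ⟨M, hM⟩ := exists_nat_ge C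
    have hzG : z ∈ G M := fun n ↦ (hC _ (mem_range_self n)).trans hM
    by_cases hint : z ∈ interior (G M)
    · exact Or.inr (bddAbove_norm_deriv_iterate_of_mem_interior hf hint)
    · exact Or.inl (mem_iUnion.mpr ⟨M, subset_closure hzG, hint⟩)

noncomputable def piSin (z : ℂ) : ℂ := π * sin z

theorem hasDerivAt_piSin (z : ℂ) : HasDerivAt piSin (π * cos z) z :=
  (hasDerivAt_sin z).const_mul _

theorem differentiable_piSin : Differentiable ℂ piSin :=
  fun z ↦ (hasDerivAt_piSin z).differentiableAt

theorem piSin_neg (z : ℂ) : piSin (-z) = -piSin z := by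
  simp [piSin, Complex.sin_neg]

theorem iterate_piSin_zero (n : ℕ) : piSin^[n] 0 = 0 :=
  Function.iterate_fixed (by simp [piSin]) n

theorem norm_pi_mul_cos_sq (z : ℂ) : ‖(π : ℂ) * cos z‖ ^ 2 = ‖(π : ℂ) ^ 2 - piSin z ^ 2‖ := by
  rw [← norm_pow, piSin]
  congr 1
  linear_combination (π : ℂ) ^ 2 * sin_sq_add_cos_sq z

theorem norm_deriv_iterate_piSin_sq (z : ℂ) (n : ℕ) :
    ‖deriv piSin^[n] z‖ ^ 2 = ∏ k ∈ Finset.range n, ‖(π : ℂ) ^ 2 - piSin^[k + 1] z ^ 2‖ := by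
  rw [(hasDerivAt_iterate_prod hasDerivAt_piSin n z).deriv, norm_prod, ← Finset.prod_pow]
  refine Finset.prod_congr rfl fun k _ ↦ ?_
  rw [norm_pi_mul_cos_sq, Function.iterate_succ_apply']

theorem Complex.norm_sin_sub_self_le {z : ℂ} (hz : ‖z‖ ≤ 1) : ‖sin z - z‖ ≤ ‖z‖ ^ 2 := by
  have hI : ‖z * I‖ ≤ 1 := by simpa using hz
  have hnI : ‖-z * I‖ ≤ 1 := by simpa using hz
  have key : sin z - z = ((exp (-z * I) - 1 - -z * I) - (exp (z * I) - 1 - z * I)) * I / 2 := by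
    rw [Complex.sin]; ring_nf; rw [I_sq]; ring
  rw [key, norm_div, norm_mul, norm_I, mul_one, RCLike.norm_ofNat]
  have h1 := norm_exp_sub_one_sub_id_le hI
  have h2 := norm_exp_sub_one_sub_id_le hnI
  simp only [norm_mul, norm_neg, norm_I, mul_one] at h1 h2
  linarith [norm_sub_le (exp (-z * I) - 1 - -z * I) (exp (z * I) - 1 - z * I)]

theorem Complex.norm_sin_le {z : ℂ} (hz : ‖z‖ ≤ 1) : ‖sin z‖ ≤ ‖z‖ + ‖z‖ ^ 2 :=
  (norm_le_norm_add_norm_sub' _ _).trans (add_le_add_right (norm_sin_sub_self_le hz) _)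

theorem norm_ofReal_pi : ‖(π : ℂ)‖ = π := Complex.norm_of_nonneg Real.pi_pos.le

theorem norm_pi_sq_sub_sq (z : ℂ) : ‖(π : ℂ) ^ 2 - z ^ 2‖ = ‖z - π‖ * ‖z + π‖ := by
  rw [← norm_mul, ← norm_neg]
  congr 1
  ring

theorem two_pi_le_norm_sub_pi_add_norm_add_pi (z : ℂ) : 2 * π ≤ ‖z - π‖ + ‖z + π‖ := by
  calc 2 * π = ‖(z + π) - (z - π)‖ := by
        rw [show (z + π) - (z - π) = 2 * (π : ℂ) by ring, norm_mul, norm_ofReal_pi,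
          RCLike.norm_ofNat]
    _ ≤ ‖z - π‖ + ‖z + π‖ := (norm_sub_le _ _).trans_eq (add_comm _ _)

theorem eight_le_norm_pi_sq_sub_sq {z : ℂ} (hz : ‖z‖ ≤ 1) : 8 ≤ ‖(π : ℂ) ^ 2 - z ^ 2‖ := by
  have h := norm_sub_norm_le ((π : ℂ) ^ 2) (z ^ 2)
  rw [norm_pow, norm_pow, norm_ofReal_pi] at h
  nlinarith [Real.pi_gt_three, norm_nonneg z]

theorem five_fourths_mul_min_norm_piSin_le_of_norm_le_one {z : ℂ} (hz : ‖z‖ ≤ 1) :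
    5 / 4 * min ‖piSin z‖ 1 ≤ min ‖z‖ 1 * ‖(π : ℂ) ^ 2 - z ^ 2‖ := by
  have hF : ‖piSin z‖ ≤ π * (2 * ‖z‖) := by
    rw [piSin, norm_mul, norm_ofReal_pi]
    gcongr
    nlinarith [norm_sin_le hz, norm_nonneg z]
  rw [min_eq_left hz]
  calc 5 / 4 * min ‖piSin z‖ 1 ≤ 5 / 4 * (π * (2 * ‖z‖)) := by
        gcongr; exact (min_le_left _ _).trans hF
    _ ≤ ‖z‖ * 8 := by nlinarith [Real.pi_lt_d2, norm_nonneg z]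
    _ ≤ ‖z‖ * ‖(π : ℂ) ^ 2 - z ^ 2‖ := by gcongr; exact eight_le_norm_pi_sq_sub_sq hz

theorem five_fourths_mul_min_norm_piSin_le_of_norm_sub_pi_lt {z : ℂ} (hz : ‖z - π‖ < 1 / 4) :
    5 / 4 * min ‖piSin z‖ 1 ≤ min ‖z‖ 1 * ‖(π : ℂ) ^ 2 - z ^ 2‖ := by
  set v := z - π
  have hF : ‖piSin z‖ ≤ π * (5 / 4 * ‖v‖) := by
    rw [show z = v + π by ring, piSin, sin_add_pi, norm_mul, norm_neg, norm_ofReal_pi]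
    gcongr
    nlinarith [norm_sin_le (hz.le.trans (by norm_num) : ‖v‖ ≤ 1), norm_nonneg v]
  have hz1 : 1 ≤ ‖z‖ := by
    have := norm_sub_norm_le (π : ℂ) z
    rw [norm_ofReal_pi, norm_sub_rev] at this
    linarith [Real.pi_gt_three]
  have hsum := two_pi_le_norm_sub_pi_add_norm_add_pi z
  rw [min_eq_right hz1, one_mul, norm_pi_sq_sub_sq]
  calc 5 / 4 * min ‖piSin z‖ 1 ≤ 5 / 4 * (π * (5 / 4 * ‖v‖)) := by
        gcongr; exact (min_le_left _ _).trans hF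
    _ ≤ ‖v‖ * (2 * π - ‖v‖) := by nlinarith [Real.pi_gt_three, norm_nonneg v]
    _ ≤ ‖v‖ * ‖z + π‖ := by gcongr; linarith

theorem five_fourths_mul_min_norm_piSin_le (z : ℂ) :
    5 / 4 * min ‖piSin z‖ 1 ≤ min ‖z‖ 1 * ‖(π : ℂ) ^ 2 - z ^ 2‖ := by
  by_cases h1 : ‖z‖ ≤ 1
  · exact five_fourths_mul_min_norm_piSin_le_of_norm_le_one h1
  by_cases hp : ‖z - π‖ < 1 / 4
  · exact five_fourths_mul_min_norm_piSin_le_of_norm_sub_pi_lt hp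
  by_cases hm : ‖z + π‖ < 1 / 4
  · have := five_fourths_mul_min_norm_piSin_le_of_norm_sub_pi_lt (z := -z)
      (by rwa [← neg_add', norm_neg])
    simpa only [piSin_neg, norm_neg, neg_sq] using this
  simp only [not_le, not_lt] at h1 hp hm
  rw [min_eq_right h1.le, one_mul, norm_pi_sq_sub_sq]
  calc 5 / 4 * min ‖piSin z‖ 1 ≤ 5 / 4 := by linarith [min_le_right ‖piSin z‖ 1]
    _ ≤ ‖z - π‖ * ‖z + π‖ := by
        nlinarith [mul_nonneg (sub_nonneg.2 hp) (sub_nonneg.2 hm), Real.pi_gt_three,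
          two_pi_le_norm_sub_pi_add_norm_add_pi z]

theorem not_bddAbove_norm_deriv_iterate_piSin {z : ℂ} (hz : ∀ n, piSin^[n] z ^ 2 ≠ π ^ 2) :
    ¬BddAbove (range fun n : ℕ ↦ ‖deriv piSin^[n] z‖) := by
  set w : ℕ → ℂ := fun k ↦ piSin^[k + 1] z
  set a : ℕ → ℝ := fun k ↦ ‖(π : ℂ) ^ 2 - w k ^ 2‖
  suffices ∀ C, ∃ n, C < ∏ k ∈ Finset.range n, a k by
    rintro ⟨C, hC⟩
    obtain ⟨n, hn⟩ := this (C ^ 2)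
    have hCn : ‖deriv piSin^[n] z‖ ≤ C := hC (mem_range_self n)
    nlinarith [norm_deriv_iterate_piSin_sq z n, norm_nonneg (deriv piSin^[n] z)]
  intro C
  by_cases hfreq : ∃ᶠ n in atTop, 1 ≤ ‖w n‖
  · have hw : ∀ k, w (k + 1) = piSin (w k) := fun k ↦ Function.iterate_succ_apply' _ _ _
    have htel := pow_mul_le_mul_prod (u := fun k ↦ min ‖w k‖ 1) (a := a) (by norm_num)
      (fun k ↦ norm_nonneg _) (fun k ↦ hw k ▸ five_fourths_mul_min_norm_piSin_le (w k))
    obtain ⟨n, hn1, hnC⟩ := (hfreq.and_eventually ((tendsto_pow_atTop_atTop_of_one_lt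
      (by norm_num : (1 : ℝ) < 5 / 4)).eventually_gt_atTop C)).exists
    refine ⟨n, hnC.trans_le ?_⟩
    have hprod : 0 ≤ ∏ k ∈ Finset.range n, a k := Finset.prod_nonneg fun k _ ↦ norm_nonneg _
    calc (5 / 4 : ℝ) ^ n = (5 / 4) ^ n * min ‖w n‖ 1 := by rw [min_eq_right hn1, mul_one]
      _ ≤ min ‖w 0‖ 1 * ∏ k ∈ Finset.range n, a k := htel n
      _ ≤ ∏ k ∈ Finset.range n, a k := mul_le_of_le_one_left hprod (min_le_right _ _)
  · obtain ⟨N, hN⟩ := eventually_atTop.mp (not_frequently.mp hfreq)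
    have hpos : 0 < ∏ k ∈ Finset.range N, a k :=
      Finset.prod_pos fun k _ ↦ norm_pos_iff.mpr (sub_ne_zero.mpr (hz (k + 1)).symm)
    obtain ⟨m, hm⟩ := pow_unbounded_of_one_lt (C / ∏ k ∈ Finset.range N, a k)
      (by norm_num : (1 : ℝ) < 8)
    have hgrow : (8 : ℝ) ^ m ≤ ∏ j ∈ Finset.range m, a (N + j) := by
      calc (8 : ℝ) ^ m = ∏ _j ∈ Finset.range m, (8 : ℝ) := by simp
        _ ≤ ∏ j ∈ Finset.range m, a (N + j) := Finset.prod_le_prod (fun _ _ ↦ by norm_num)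
            fun j _ ↦ eight_le_norm_pi_sq_sub_sq (not_le.mp (hN (N + j) (by omega))).le
    refine ⟨N + m, ?_⟩
    calc C < 8 ^ m * ∏ k ∈ Finset.range N, a k := (div_lt_iff₀ hpos).mp hm
      _ ≤ (∏ k ∈ Finset.range N, a k) * ∏ j ∈ Finset.range m, a (N + j) := by
          rw [mul_comm]; gcongr
      _ = ∏ k ∈ Finset.range (N + m), a k := (Finset.prod_range_add _ _ _).symm

theorem isMeagre_setOf_exists_iterate_piSin_sq_eq :
    IsMeagre {z | ∃ n : ℕ, piSin^[n] z ^ 2 = π ^ 2} := by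
  simp only [ofPred_exists]
  refine isMeagre_iUnion fun n ↦ IsNowhereDense.isMeagre ?_
  have hd : Differentiable ℂ fun z ↦ piSin^[n] z ^ 2 := (differentiable_piSin.iterate n).pow 2
  refine (isClosed_eq hd.continuous continuous_const).isNowhereDense_iff.mpr
    (interior_setOf_eq_eq_empty hd ⟨0, ?_⟩)
  simpa [iterate_piSin_zero, eq_comm] using pow_ne_zero 2 (ofReal_ne_zero.mpr Real.pi_ne_zero)

theorem interior_boundedOrbitSet_piSin : interior (boundedOrbitSet piSin) = ∅ := by
  have hK : IsMeagre (boundedOrbitSet piSin) :=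
    isMeagre_boundedOrbitSet differentiable_piSin
      (isMeagre_setOf_exists_iterate_piSin_sq_eq.mono fun z hz ↦ by
        by_contra hne
        exact not_bddAbove_norm_deriv_iterate_piSin (not_exists.mp hne) hz)
  by_contra hne
  exact not_isMeagre_of_isOpen isOpen_interior (nonempty_iff_ne_empty.mpr hne)
    (hK.mono interior_subset)

theorem piSin_ofReal (x : ℝ) : piSin x = (π * Real.sin x : ℝ) := by
  simp [piSin, ofReal_sin]

theorem range_ofReal_subset_boundedOrbitSet_piSin :
    range ((↑) : ℝ → ℂ) ⊆ boundedOrbitSet piSin := by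
  have hmaps : MapsTo piSin (range ((↑) : ℝ → ℂ)) (range ((↑) : ℝ → ℂ)) := by
    rintro _ ⟨x, rfl⟩
    exact ⟨_, (piSin_ofReal x).symm⟩
  rintro _ ⟨x, rfl⟩
  show Bornology.IsBounded (range fun n : ℕ ↦ piSin^[n] x)
  refine ((isBounded_closedBall (x := 0) (r := π)).insert (x : ℂ)).subset
    (range_subset_iff.mpr fun n ↦ ?_)
  cases n with
  | zero => exact mem_insert _ _
  | succ n =>
    obtain ⟨y, hy⟩ := hmaps.iterate n (mem_range_self x)
    refine mem_insert_of_mem _ (mem_closedBall_zero_iff.mpr ?_)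
    rw [Function.iterate_succ_apply', ← hy, piSin_ofReal, norm_real, Real.norm_eq_abs, abs_mul,
      abs_of_pos Real.pi_pos]
    exact mul_le_of_le_one_right Real.pi_pos.le (Real.abs_sin_le_one y)

theorem transcendentalEntire_piSin : TranscendentalEntire piSin := by
  refine ⟨differentiable_piSin, fun ⟨p, hp⟩ ↦ ?_⟩
  have hroots : ∀ k : ℕ, p.IsRoot ((k * π : ℝ) : ℂ) := fun k ↦ by
    rw [Polynomial.IsRoot, ← hp, piSin_ofReal, Real.sin_nat_mul_pi, mul_zero, ofReal_zero]
  have hp0 : p = 0 := Polynomial.eq_zero_of_infinite_isRoot p <|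
    infinite_of_injective_forall_mem (fun a b hab ↦ by
      simpa [Real.pi_ne_zero] using hab) hroots
  have := hp ((π / 2 : ℝ) : ℂ)
  rw [hp0, piSin_ofReal, Real.sin_pi_div_two, mul_one] at this
  simp [Real.pi_ne_zero] at this

/-- There exists a transcendental entire function `f` such that some component of
`K(f)` has empty interior but is not a singleton. -/
theorem exists_component_empty_interior_not_singleton :
    ∃ f : ℂ → ℂ, TranscendentalEntire f ∧
      ∃ z₀ ∈ boundedOrbitSet f,
        interior (connectedComponentIn (boundedOrbitSet f) z₀) = ∅ ∧
        ∃ w ∈ connectedComponentIn (boundedOrbitSet f) z₀, w ≠ z₀ := by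
  have hℝ := range_ofReal_subset_boundedOrbitSet_piSin
  have h0 : (0 : ℂ) ∈ range ((↑) : ℝ → ℂ) := ⟨0, ofReal_zero⟩
  have hcomp : range ((↑) : ℝ → ℂ) ⊆ connectedComponentIn (boundedOrbitSet piSin) 0 :=
    (isPreconnected_range continuous_ofReal).subset_connectedComponentIn h0 hℝ
  refine ⟨piSin, transcendentalEntire_piSin, 0, hℝ h0, ?_, 1, hcomp ⟨1, ofReal_one⟩, one_ne_zero⟩
  exact subset_empty_iff.mp <| interior_boundedOrbitSet_piSin ▸
    interior_mono (connectedComponentIn_subset _ _)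
end

section
/- Let λ be a real number with 0 < λ < 1/e and let f : ℂ → ℂ be the exponential function f(z) = λ·e^z. Then K(f) is connected. -/
open Filter Topology

/-!
Let `A` be the set of points whose orbit meets the half-plane `H = {re z < 1}`. Since
`|f z| = λ e^(re z) < λ e < 1` on `H`, the map `f` sends `H` into the unit disc, so `A ⊆ K(f)`.
Each `f⁻ⁿ(H)` is connected and contains `0`: pulling a connected open set `W ∋ 0` back by `exp`,
a covering of `ℂ ∖ {0}`, gives a connected set, because every path in `W ∖ {0}` to a point of a
small punctured disc lifts to a path ending in a left half-plane. Hence `A` is connected.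
Conversely, if a disc `D(z, r)` misses `A`, then `re fⁿ ≥ 1` on it for all `n`, which forces
`|fⁿ| ≥ β := log (1/λ) > 1` there. The Cauchy estimate for `1/fⁿ` on `D(z, r/2)` bounds
`|(fⁿ)'(z)| = |f¹(z) ⋯ fⁿ(z)| ≥ βⁿ` by a multiple of `|fⁿ(z)|²`, so the orbit of `z` is unbounded.
Thus `A ⊆ K(f) ⊆ closure A`, and `K(f)` is connected.
-/

open Set Metric

theorem IsPreconnected.diff_singleton {X : Type*} [TopologicalSpace X] {s N : Set X} {x : X}
    [(𝓝[≠] x).NeBot] (hs : IsPreconnected s) (hN : N ∈ 𝓝 x) (hNs : N ⊆ s)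
    (hNx : IsPreconnected (N \ {x})) : IsPreconnected (s \ {x}) := by
  -- Adding `interior N` to the side containing `N \ {x}` turns a separation of `s \ {x}` into
  -- one of `s`.
  have key : ∀ u v, IsOpen u → IsOpen v → s \ {x} ⊆ u ∪ v → s \ {x} ∩ (u ∩ v) = ∅ →
      N \ {x} ⊆ u → s \ {x} ⊆ u := by
    intro u v hu hv hcover hdisj hNu
    have hxv : x ∉ v := fun hxv => by
      have hNv : N ∩ v ∈ 𝓝[≠] x := mem_nhdsWithin_of_mem_nhds (inter_mem hN (hv.mem_nhds hxv))
      obtain ⟨y, ⟨hyN, hyv⟩, hyx⟩ := Filter.nonempty_of_mem (inter_mem hNv self_mem_nhdsWithin)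
      exact (eq_empty_iff_forall_notMem.mp hdisj) y ⟨⟨hNs hyN, hyx⟩, hNu ⟨hyN, hyx⟩, hyv⟩
    have hcover' : s ⊆ (u ∪ interior N) ∪ v := fun y hy => by
      by_cases hyx : y = x
      · exact Or.inl (Or.inr (hyx ▸ mem_interior_iff_mem_nhds.mpr hN))
      · exact (hcover ⟨hy, hyx⟩).imp_left Or.inl
    have hdisj' : s ∩ ((u ∪ interior N) ∩ v) = ∅ := by
      refine eq_empty_iff_forall_notMem.mpr fun y ⟨hys, hyuN, hyv⟩ => ?_
      have hy : y ∈ s \ {x} := ⟨hys, fun hyx => hxv (hyx ▸ hyv)⟩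
      have hyu : y ∈ u := hyuN.elim id fun hyN => hNu ⟨interior_subset hyN, hy.2⟩
      exact (eq_empty_iff_forall_notMem.mp hdisj) y ⟨hy, hyu, hyv⟩
    rcases isPreconnected_iff_subset_of_disjoint.mp hs _ v (hu.union isOpen_interior) hv
      hcover' hdisj' with h | h
    · exact fun y hy => (h hy.1).elim id fun hyN => hNu ⟨interior_subset hyN, hy.2⟩
    · exact absurd (h (hNs (mem_of_mem_nhds hN))) hxv
  refine isPreconnected_iff_subset_of_disjoint.mpr fun u v hu hv hcover hdisj => ?_
  have hNcover : N \ {x} ⊆ u ∪ v := (sdiff_subset_sdiff_left hNs).trans hcover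
  have hNdisj : N \ {x} ∩ (u ∩ v) = ∅ :=
    subset_empty_iff.mp (hdisj ▸ inter_subset_inter_left _ (sdiff_subset_sdiff_left hNs))
  rcases isPreconnected_iff_subset_of_disjoint.mp hNx u v hu hv hNcover hNdisj with h | h
  · exact Or.inl (key u v hu hv hcover hdisj h)
  · exact Or.inr (key v u hv hu (union_comm u v ▸ hcover) (inter_comm u v ▸ hdisj) h)

theorem IsCoveringMap.isPathConnected_preimage {E X : Type*} [TopologicalSpace E]
    [TopologicalSpace X] {p : E → X} (hp : IsCoveringMap p) {V : Set X} (hV : IsPathConnected V)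
    {S : Set E} (hS : IsPathConnected S) (hSV : S ⊆ p ⁻¹' V) {x₀ : X} (hx₀ : x₀ ∈ V)
    (hfiber : p ⁻¹' {x₀} ⊆ S) : IsPathConnected (p ⁻¹' V) := by
  obtain ⟨s₀, hs₀, hS⟩ := hS
  refine ⟨s₀, hSV hs₀, fun e he => ?_⟩
  obtain ⟨γ, hγV⟩ := hV.joinedIn (p e) he x₀ hx₀
  set Γ := hp.liftPath γ e (by simp)
  have hΓ : ∀ t, p (Γ t) = γ t := fun t => congrFun (hp.liftPath_lifts γ e _) t
  have hlift : JoinedIn (p ⁻¹' V) e (Γ 1) :=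
    ⟨⟨Γ, hp.liftPath_zero γ e _, rfl⟩, fun t => by simp [hΓ, hγV t]⟩
  exact ((hS (hfiber (by simp [hΓ]))).mono hSV).trans hlift.symm

theorem Complex.exp_image_re_lt (c : ℝ) :
    Complex.exp '' {z | z.re < c} = ball 0 (Real.exp c) \ {0} := by
  ext w
  constructor
  · rintro ⟨z, hz, rfl⟩
    exact ⟨by simpa [Complex.norm_exp] using hz, Complex.exp_ne_zero z⟩
  · rintro ⟨hw, hw0 : w ≠ 0⟩
    refine ⟨Complex.log w, ?_, Complex.exp_log hw0⟩
    rw [mem_ofPred_eq, Complex.log_re, ← Real.log_exp c]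
    exact Real.log_lt_log (norm_pos_iff.mpr hw0) (by simpa using hw)

theorem Complex.isPathConnected_exp_preimage {W : Set ℂ} (hW : IsOpen W) (hWc : IsPreconnected W)
    (h0 : 0 ∈ W) : IsPathConnected (Complex.exp ⁻¹' W) := by
  obtain ⟨ε, hε, hball⟩ := isOpen_iff.mp hW 0 h0
  set H : Set ℂ := {z | z.re < Real.log ε}
  have hexpH : Complex.exp '' H = ball 0 ε \ {0} := by
    rw [Complex.exp_image_re_lt, Real.exp_log hε]
  have hH : IsPathConnected H :=
    (convex_halfSpace_re_lt _).isPathConnected ⟨(Real.log ε - 1 : ℝ), by simp⟩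
  have hW0 : IsPathConnected (W \ {0}) := by
    refine ((hW.sdiff isClosed_singleton).isConnected_iff_isPathConnected).mp
      ⟨(hexpH ▸ hH.nonempty.image _).mono (sdiff_subset_sdiff_left hball), ?_⟩
    have hP : IsPreconnected (ball (0 : ℂ) ε \ {0}) :=
      hexpH ▸ hH.isConnected.isPreconnected.image _ Complex.continuous_exp.continuousOn
    exact hWc.diff_singleton (ball_mem_nhds 0 hε) hball hP
  let p : ℂ → {w : ℂ // w ≠ 0} := fun z => ⟨Complex.exp z, Complex.exp_ne_zero z⟩
  have hHV : H ⊆ p ⁻¹' (Subtype.val ⁻¹' (W \ {0})) := fun z hz =>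
    sdiff_subset_sdiff_left hball (hexpH ▸ mem_image_of_mem _ hz)
  have hfiber : p ⁻¹' {p (Real.log ε - 1 : ℝ)} ⊆ H := fun z hz => by
    have := congrArg (fun w : {w : ℂ // w ≠ 0} => ‖w.val‖) hz
    simp only [p, Complex.norm_exp, Complex.ofReal_re, Real.exp_eq_exp] at this
    simp [H, this]
  convert Complex.isCoveringMap_exp.isPathConnected_preimage (hW0.preimage_coe (U := {w | w ≠ 0})
    (fun w hw => hw.2)) hH hHV (hHV (by simp [H])) hfiber using 1
  ext z
  simp [Complex.exp_ne_zero]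

theorem hasDerivAt_iterate {𝕜 : Type*} [NontriviallyNormedField 𝕜] {f f' : 𝕜 → 𝕜}
    (hf : ∀ z, HasDerivAt f (f' z) z) (n : ℕ) (z : 𝕜) :
    HasDerivAt f^[n] (∏ k ∈ Finset.range n, f' (f^[k] z)) z := by
  induction n with
  | zero => simpa using hasDerivAt_id z
  | succ n ih =>
    rw [Finset.prod_range_succ, mul_comm, Function.iterate_succ']
    exact (hf _).comp z ih

theorem norm_deriv_le_of_le_norm_on_ball {F : ℂ → ℂ} {z : ℂ} {r β : ℝ} (hr : 0 < r)
    (hβ : 0 < β) (hF : DifferentiableOn ℂ F (ball z r)) (hlow : ∀ w ∈ ball z r, β ≤ ‖F w‖) :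
    ‖deriv F z‖ ≤ 2 * ‖F z‖ ^ 2 / (β * r) := by
  have hne : ∀ w ∈ ball z r, F w ≠ 0 := fun w hw h0 => by
    have := hlow w hw
    rw [h0, norm_zero] at this
    linarith
  have hFz := hne z (mem_ball_self hr)
  have hinv : DifferentiableOn ℂ (fun w => (F w)⁻¹) (ball z r) := hF.inv hne
  have hcauchy : ‖deriv (fun w => (F w)⁻¹) z‖ ≤ β⁻¹ / (r / 2) := by
    refine Complex.norm_deriv_le_of_forall_mem_sphere_norm_le (half_pos hr)
      (hinv.diffContOnCl_ball (closedBall_subset_ball (half_lt_self hr))) fun w hw => ?_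
    rw [norm_inv]
    exact inv_anti₀ hβ (hlow w (sphere_subset_closedBall.trans
      (closedBall_subset_ball (half_lt_self hr)) hw))
  rw [deriv_fun_inv'' (hF.differentiableAt (isOpen_ball.mem_nhds (mem_ball_self hr))) hFz,
    norm_div, norm_neg, norm_pow, div_le_iff₀ (by positivity)] at hcauchy
  calc ‖deriv F z‖ ≤ β⁻¹ / (r / 2) * ‖F z‖ ^ 2 := hcauchy
    _ = 2 * ‖F z‖ ^ 2 / (β * r) := by field_simp

theorem notMem_boundedOrbitSet_of_le_norm_iterate {f : ℂ → ℂ} (hfd : ∀ w, HasDerivAt f (f w) w)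
    {z : ℂ} {r β : ℝ} (hr : 0 < r) (hβ : 1 < β) (hlow : ∀ w ∈ ball z r, ∀ n, β ≤ ‖f^[n] w‖) :
    z ∉ boundedOrbitSet f := by
  rintro (hz : Bornology.IsBounded (range fun n => f^[n] z))
  obtain ⟨M, hM⟩ := isBounded_iff_forall_norm_le.mp hz
  have hderiv : ∀ n, HasDerivAt f^[n] (∏ k ∈ Finset.range n, f^[k + 1] z) z := fun n => by
    simpa [Function.iterate_succ_apply'] using hasDerivAt_iterate hfd n z
  have hdiff : ∀ n, DifferentiableOn ℂ f^[n] (ball z r) := fun n =>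
    (Differentiable.iterate (fun w => (hfd w).differentiableAt) n).differentiableOn
  have hbound : ∀ n, β ^ n ≤ 2 * M ^ 2 / (β * r) := by
    intro n
    calc β ^ n = ∏ _k ∈ Finset.range n, β := by rw [Finset.prod_const, Finset.card_range]
      _ ≤ ∏ k ∈ Finset.range n, ‖f^[k + 1] z‖ := Finset.prod_le_prod (fun _ _ => by positivity)
          fun k _ => hlow z (mem_ball_self hr) (k + 1)
      _ = ‖deriv f^[n] z‖ := by rw [(hderiv n).deriv, norm_prod]
      _ ≤ 2 * ‖f^[n] z‖ ^ 2 / (β * r) :=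
          norm_deriv_le_of_le_norm_on_ball hr (by positivity) (hdiff n) fun w hw => hlow w hw n
      _ ≤ 2 * M ^ 2 / (β * r) := by
          gcongr
          exact hM _ ⟨n, rfl⟩
  obtain ⟨n, hn⟩ := pow_unbounded_of_one_lt (2 * M ^ 2 / (β * r)) hβ
  exact (hbound n).not_gt hn

def hittingSet {α : Type*} (f : α → α) (U : Set α) : Set α :=
  ⋃ n, f^[n] ⁻¹' U

theorem isPreconnected_hittingSet {X : Type*} [TopologicalSpace X] {f : X → X} {U : Set X}
    {x₀ : X} (hf : Continuous f) (hU : IsOpen U) (hUc : IsPreconnected U) (hx₀ : x₀ ∈ U)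
    (hfU : MapsTo f U U)
    (hpre : ∀ W, IsOpen W → IsPreconnected W → x₀ ∈ W → IsPreconnected (f ⁻¹' W)) :
    IsPreconnected (hittingSet f U) := by
  have hx₀n : ∀ n, x₀ ∈ f^[n] ⁻¹' U := fun n => hfU.iterate n hx₀
  have hn : ∀ n, IsPreconnected (f^[n] ⁻¹' U) := by
    intro n
    induction n with
    | zero => exact hUc
    | succ n ih =>
      rw [Function.iterate_succ, preimage_comp]
      exact hpre _ (hU.preimage (hf.iterate n)) ih (hx₀n n)
  exact isPreconnected_iUnion ⟨x₀, mem_iInter.mpr hx₀n⟩ hn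

theorem hittingSet_subset_boundedOrbitSet {f : ℂ → ℂ} {U : Set ℂ} (hfU : MapsTo f U U)
    (hb : Bornology.IsBounded (f '' U)) : hittingSet f U ⊆ boundedOrbitSet f := by
  intro z hz
  obtain ⟨n, hn⟩ := mem_iUnion.mp hz
  refine (((finite_Iic n).image fun m => f^[m] z).isBounded.union hb).subset ?_
  rintro _ ⟨m, rfl⟩
  rcases le_or_gt m n with hm | hm
  · exact Or.inl ⟨m, hm, rfl⟩
  · obtain ⟨k, rfl⟩ := Nat.exists_eq_add_of_lt hm
    refine Or.inr ⟨f^[k] (f^[n] z), hfU.iterate k hn, ?_⟩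
    rw [← Function.iterate_succ_apply' f, ← Function.iterate_add_apply]
    congr 1
    omega

section ScaledExp

variable {lam : ℝ} {f : ℂ → ℂ}

theorem norm_eq_mul_exp_re (hf : ∀ z, f z = lam * Complex.exp z) (hlam : 0 ≤ lam) (z : ℂ) :
    ‖f z‖ = lam * Real.exp z.re := by
  rw [hf, norm_mul, Complex.norm_real, Real.norm_of_nonneg hlam, Complex.norm_exp]

theorem norm_lt_one_of_re_lt_one (hf : ∀ z, f z = lam * Complex.exp z) (hlam : 0 ≤ lam)
    (hlam_e : lam * Real.exp 1 < 1) {z : ℂ} (hz : z.re < 1) : ‖f z‖ < 1 := by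
  rw [norm_eq_mul_exp_re hf hlam]
  calc lam * Real.exp z.re ≤ lam * Real.exp 1 := by gcongr
    _ < 1 := hlam_e

theorem log_inv_le_re_of_one_le_re (hf : ∀ z, f z = lam * Complex.exp z) (hlam : 0 < lam)
    {z : ℂ} (hz : 1 ≤ (f z).re) : Real.log lam⁻¹ ≤ z.re := by
  have h : 1 ≤ lam * Real.exp z.re := by
    rw [← norm_eq_mul_exp_re hf hlam.le]
    exact hz.trans (Complex.re_le_norm _)
  rwa [Real.log_le_iff_le_exp (inv_pos.mpr hlam), inv_le_iff_one_le_mul₀' hlam]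

theorem one_lt_log_inv (hlam : 0 < lam) (hlam_e : lam * Real.exp 1 < 1) :
    1 < Real.log lam⁻¹ := by
  rwa [Real.lt_log_iff_exp_lt (inv_pos.mpr hlam), lt_inv_comm₀ (Real.exp_pos 1) hlam,
    ← one_div, lt_div_iff₀ (Real.exp_pos 1)]

theorem isPreconnected_preimage_of_eq_mul_exp (hf : ∀ z, f z = lam * Complex.exp z)
    (hlam : lam ≠ 0) {W : Set ℂ} (hW : IsOpen W) (hWc : IsPreconnected W) (h0 : 0 ∈ W) :
    IsPreconnected (f ⁻¹' W) := by
  let μ := Homeomorph.mulLeft₀ (lam : ℂ) (Complex.ofReal_ne_zero.mpr hlam)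
  have hf' : f = μ ∘ Complex.exp := funext hf
  rw [hf', preimage_comp]
  have h0' : 0 ∈ μ ⁻¹' W := by simpa [μ] using h0
  exact (Complex.isPathConnected_exp_preimage (hW.preimage μ.continuous)
    (μ.isPreconnected_preimage.mpr hWc) h0').isConnected.isPreconnected

theorem boundedOrbitSet_subset_closure_hittingSet (hf : ∀ z, f z = lam * Complex.exp z)
    (hlam : 0 < lam) (hlam_e : lam * Real.exp 1 < 1) :
    boundedOrbitSet f ⊆ closure (hittingSet f {z | z.re < 1}) := by
  intro z hz
  by_contra hzA
  obtain ⟨r, hr, hball⟩ := isOpen_iff.mp isClosed_closure.isOpen_compl z hzA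
  have hfd : ∀ w, HasDerivAt f (f w) w := fun w => by
    simpa [funext hf] using (Complex.hasDerivAt_exp w).const_mul (lam : ℂ)
  refine notMem_boundedOrbitSet_of_le_norm_iterate hfd hr (one_lt_log_inv hlam hlam_e)
    (fun w hw n => ?_) hz
  have hesc : ∀ m, 1 ≤ (f^[m] w).re := fun m => not_lt.mp fun hm =>
    hball hw (subset_closure (mem_iUnion.mpr ⟨m, hm⟩))
  refine (log_inv_le_re_of_one_le_re hf hlam ?_).trans (Complex.re_le_norm _)
  simpa [← Function.iterate_succ_apply' f] using hesc (n + 1)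

end ScaledExp

/-- For `f(z) = λ e^z` with `0 < λ < 1/e`, the set `K(f)` is connected. -/
theorem Kf_connected_exponential (lam : ℝ) (h1 : 0 < lam) (h2 : lam < 1 / Real.exp 1)
    (f : ℂ → ℂ) (hf : ∀ z : ℂ, f z = (lam : ℂ) * Complex.exp z) :
    IsConnected (boundedOrbitSet f) := by
  have hlam_e : lam * Real.exp 1 < 1 := (lt_div_iff₀ (Real.exp_pos 1)).mp h2
  set H : Set ℂ := {z | z.re < 1}
  have hH0 : (0 : ℂ) ∈ H := by simp [H]
  have hfH : f '' H ⊆ ball 0 1 := image_subset_iff.mpr fun z hz =>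
    mem_ball_zero_iff.mpr (norm_lt_one_of_re_lt_one hf h1.le hlam_e hz)
  have hHH : MapsTo f H H := fun z hz =>
    (Complex.re_le_norm _).trans_lt (mem_ball_zero_iff.mp (hfH (mem_image_of_mem f hz)))
  have hfc : Continuous f := by
    rw [funext hf]
    fun_prop
  have hA : IsConnected (hittingSet f H) :=
    ⟨⟨0, mem_iUnion.mpr ⟨0, hH0⟩⟩, isPreconnected_hittingSet hfc
      (isOpen_lt Complex.continuous_re continuous_const) (convex_halfSpace_re_lt 1).isPreconnected
      hH0 hHH fun _ hW hWc h0 => isPreconnected_preimage_of_eq_mul_exp hf h1.ne' hW hWc h0⟩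
  exact hA.subset_closure (hittingSet_subset_boundedOrbitSet hHH (isBounded_ball.subset hfH))
    (boundedOrbitSet_subset_closure_hittingSet hf h1 hlam_e)
end

section
/- Let f : ℂ → ℂ be a transcendental entire function for which there exists a sequence (D_n)_{n∈ℕ} of bounded, simply connected domains with closure(D_n) ⊆ D_{n+1} for all n, ⋃_n D_n = ℂ, and such that f(∂D_n) surrounds closure(D_n) for all n (i.e. closure(D_n) lies in a bounded connected component of the complement of f(∂D_n)). Then f has no finite asymptotic values: there is no a ∈ ℂ and no continuous curve γ : [0,∞) → ℂ with |γ(t)| → ∞ and f(γ(t)) → a as t → ∞. -/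
open Filter Topology

open Set Bornology

/-! An asymptotic curve for `a` must leave the bounded domain `D m` containing both `a` and a
late point of the curve, so it crosses `∂(D m)` at a late time, where `f` takes a value near `a`,
hence in `D m`. But `f(∂(D m))` surrounds, hence misses, `closure (D m)`. -/

theorem SurroundsSet.disjoint {S T : Set ℂ} (h : SurroundsSet S T) : Disjoint S T := by
  obtain ⟨_, _, hT, _⟩ := h
  exact disjoint_compl_right.mono_right (hT.trans (connectedComponentIn_subset _ _))

theorem IsPreconnected.inter_frontier_nonempty {X : Type*} [TopologicalSpace X] {s U : Set X}
    (hs : IsPreconnected s) (hin : (s ∩ U).Nonempty) (hout : (s \ U).Nonempty) :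
    (s ∩ frontier U).Nonempty := by
  rw [← not_disjoint_iff_nonempty_inter]
  intro hfr
  have hcover : s ⊆ interior U ∪ (closure U)ᶜ := fun x hx => by
    by_cases hxU : x ∈ closure U
    · exact .inl (by_contra fun hxi => hfr.notMem_of_mem_left hx ⟨hxU, hxi⟩)
    · exact .inr hxU
  obtain ⟨x, hxs, hxU⟩ := hin
  obtain ⟨y, hys, hyU⟩ := hout
  have hx : x ∈ interior U := (hcover hxs).resolve_right (not_not.2 (subset_closure hxU))
  have hy : y ∈ (closure U)ᶜ := (hcover hys).resolve_left fun h => hyU (interior_subset h)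
  obtain ⟨z, -, hzi, hzc⟩ := hs _ _ isOpen_interior isClosed_closure.isOpen_compl hcover
    ⟨x, hxs, hx⟩ ⟨y, hys, hy⟩
  exact hzc (interior_subset.trans subset_closure hzi)

theorem exists_ge_mem_frontier_of_tendsto_cobounded {X : Type*} [TopologicalSpace X]
    [Bornology X] {γ : ℝ → X} {U : Set X} {T : ℝ} (hγ : ContinuousOn γ (Ici T))
    (hγ_cob : Tendsto γ atTop (cobounded X)) (hU : IsBounded U) (hT : γ T ∈ U) :
    ∃ t ≥ T, γ t ∈ frontier U := by
  obtain ⟨t₁, hγt₁, hTt₁⟩ :=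
    ((hγ_cob.eventually_mem hU).and (eventually_ge_atTop T)).exists
  have hpre : IsPreconnected (γ '' Icc T t₁) :=
    isPreconnected_Icc.image γ (hγ.mono Icc_subset_Ici_self)
  obtain ⟨_, ⟨t, ht, rfl⟩, hfr⟩ := hpre.inter_frontier_nonempty
    ⟨γ T, mem_image_of_mem γ ⟨le_rfl, hTt₁⟩, hT⟩
    ⟨γ t₁, mem_image_of_mem γ ⟨hTt₁, le_rfl⟩, hγt₁⟩
  exact ⟨t, ht.1, hfr⟩

theorem no_finite_asymptotic_values_general (f : ℂ → ℂ)
    (D : ℕ → Set ℂ)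
    (hopen : ∀ n, IsOpen (D n))
    (hbd : ∀ n, Bornology.IsBounded (D n))
    (hcl : ∀ n, closure (D n) ⊆ D (n + 1)) (hun : (⋃ n, D n) = Set.univ)
    (hsurr : ∀ n, SurroundsSet (f '' frontier (D n)) (closure (D n))) :
    ¬ ∃ a : ℂ, ∃ γ : ℝ → ℂ, ContinuousOn γ (Set.Ici (0 : ℝ)) ∧
        Tendsto (fun t => ‖γ t‖) atTop atTop ∧
        Tendsto (fun t => f (γ t)) atTop (nhds a) := by
  rintro ⟨a, γ, hγc, hγ_norm, hγa⟩
  have hmono : Monotone D := monotone_nat_of_le_succ fun n => subset_closure.trans (hcl n)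
  have hmem (z : ℂ) : ∃ n, z ∈ D n := mem_iUnion.1 (hun ▸ mem_univ z)
  obtain ⟨N, haN⟩ := hmem a
  obtain ⟨T, hT⟩ := ((hγa.eventually_mem ((hopen N).mem_nhds haN)).and
    (eventually_ge_atTop (0 : ℝ))).exists_forall_of_atTop
  obtain ⟨M, hM⟩ := hmem (γ T)
  obtain ⟨t, htT, hfr⟩ := exists_ge_mem_frontier_of_tendsto_cobounded
    (hγc.mono (Ici_subset_Ici.2 (hT T le_rfl).2)) (tendsto_norm_atTop_iff_cobounded.1 hγ_norm)
    (hbd (max M N)) (hmono (le_max_left M N) hM)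
  exact (hsurr _).disjoint.notMem_of_mem_left (mem_image_of_mem f hfr)
    (subset_closure (hmono (le_max_right M N) (hT t htT).1))

/-- A transcendental entire function admitting an exhaustion by bounded, simply connected
domains `D n` with `closure (D n) ⊆ D (n+1)` such that `f(∂(D n))` surrounds
`closure (D n)` has no finite asymptotic values. -/
theorem no_finite_asymptotic_values (f : ℂ → ℂ) (hf : TranscendentalEntire f)
    (D : ℕ → Set ℂ)
    (hopen : ∀ n, IsOpen (D n)) (hconn : ∀ n, IsConnected (D n))
    (hbd : ∀ n, Bornology.IsBounded (D n)) (hsc : ∀ n, SimplyConnectedSpace (D n))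
    (hcl : ∀ n, closure (D n) ⊆ D (n + 1)) (hun : (⋃ n, D n) = Set.univ)
    (hsurr : ∀ n, SurroundsSet (f '' frontier (D n)) (closure (D n))) :
    ¬ ∃ a : ℂ, ∃ γ : ℝ → ℂ, ContinuousOn γ (Set.Ici (0 : ℝ)) ∧
        Tendsto (fun t => ‖γ t‖) atTop atTop ∧
        Tendsto (fun t => f (γ t)) atTop (nhds a) :=
  no_finite_asymptotic_values_general f D hopen hbd hcl hun hsurr
end
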